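/- Let x and y be distinct l-digit binary fractions in [0,1). Define the tree distance d_T(x,y) recursively by d_T(x,x)=0 and d_T(x,y) = 1 + d_T(x^{(1)}, y^{(1)}), where x^{(1)} is obtained by dropping the last binary digit of x. Then d_T(x,y) = l + 1 + ⌊log₂(y ⊖ x)⌋, where ⊖ denotes bitwise XOR of the binary expansions. -/
import Mathlib


/-- The real value of an `l`-digit binary fraction `0.x₁x₂…x_l`. -/
noncomputable def binVal (l : ℕ) (x : Fin l → Fin 2) : ℝ :=
  ∑ j : Fin l, (x j : ℝ) / 2 ^ ((j : ℕ) + 1)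

/-- The bitwise XOR `y ⊖ x` of two `l`-digit binary fractions, as a real number. -/
noncomputable def binXorVal (l : ℕ) (x y : Fin l → Fin 2) : ℝ :=
  ∑ j : Fin l, ((((y j : ℕ) + (x j : ℕ)) % 2 : ℕ) : ℝ) / 2 ^ ((j : ℕ) + 1)

/-- The tree metric on leaves of the regular binary tree of depth `l`:
`d_T(x,x) = 0` and `d_T(x,y) = 1 + d_T(x⁽¹⁾, y⁽¹⁾)` where `x⁽¹⁾` drops the last digit. -/
def treeDist : (l : ℕ) → (Fin l → Fin 2) → (Fin l → Fin 2) → ℕ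
  | 0, _, _ => 0
  | l + 1, x, y =>
      if x = y then 0
      else 1 + treeDist l (x ∘ Fin.castSucc) (y ∘ Fin.castSucc)

lemma treeDist_self : ∀ (l : ℕ) (x : Fin l → Fin 2), treeDist l x x = 0 := by
  intro l x
  cases l <;> simp [treeDist]

/-- If `k` is the least index where `x` and `y` differ then `treeDist l x y = l - k`. -/
lemma treeDist_of_least : ∀ (l k : ℕ) (hk : k < l) (x y : Fin l → Fin 2),
    x ⟨k, hk⟩ ≠ y ⟨k, hk⟩ → (∀ j : Fin l, (j : ℕ) < k → x j = y j) →
    treeDist l x y = l - k := by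
  intro l
  induction l with
  | zero => intro k hk; omega
  | succ l ih =>
    intro k hk x y hne h0
    have hxy : x ≠ y := fun h => hne (by rw [h])
    rw [treeDist, if_neg hxy]
    rcases Nat.lt_or_ge k l with hkl | hkl
    · have := ih k hkl (x ∘ Fin.castSucc) (y ∘ Fin.castSucc)
        (by simpa [Fin.castSucc] using hne)
        (fun j hj => h0 (Fin.castSucc j) hj)
      rw [this]; omega
    · have hk' : k = l := by omega
      subst hk'
      have : x ∘ Fin.castSucc = y ∘ Fin.castSucc := by
        funext j
        exact h0 (Fin.castSucc j) j.isLt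
      rw [this, treeDist_self]
      omega

lemma geom_tail : ∀ (m k : ℕ),
    ∑ j ∈ Finset.Ico k (k + m), ((1:ℝ)/2) ^ (j + 1) = (1/2) ^ k - (1/2) ^ (k + m) := by
  intro m
  induction m with
  | zero => simp
  | succ m ih =>
    intro k
    rw [show k + (m+1) = (k+m) + 1 by ring, Finset.sum_Ico_succ_top (by omega), ih]
    ring

/-- For distinct `l`-digit binary fractions,
`d_T(x,y) = l + 1 + ⌊log₂(y ⊖ x)⌋`. -/
theorem treeDist_eq (l : ℕ) (x y : Fin l → Fin 2) (hxy : x ≠ y) :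
    (treeDist l x y : ℤ) = l + 1 + ⌊Real.logb 2 (binXorVal l x y)⌋ := by
  classical
  -- the least index where x and y differ
  have hex : ∃ n, ∃ h : n < l, x ⟨n, h⟩ ≠ y ⟨n, h⟩ := by
    by_contra h
    push_neg at h
    exact hxy (funext fun j => h j j.isLt)
  set k := Nat.find hex with hkdef
  obtain ⟨hk, hne⟩ := Nat.find_spec hex
  have h0 : ∀ j : Fin l, (j : ℕ) < k → x j = y j := by
    intro j hj
    by_contra h
    exact Nat.find_min hex hj ⟨j.isLt, by simpa using h⟩
  -- tree distance
  have hTD : treeDist l x y = l - k := treeDist_of_least l k hk x y hne h0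
  -- the xor digits
  set d : Fin l → ℕ := fun j => ((y j : ℕ) + (x j : ℕ)) % 2 with hd
  have hd1 : ∀ j, d j ≤ 1 := fun j => Nat.lt_succ_iff.mp (Nat.mod_lt _ (by norm_num))
  have hdk : d ⟨k, hk⟩ = 1 := by
    have h1 := (x ⟨k, hk⟩).isLt
    have h2 := (y ⟨k, hk⟩).isLt
    have h3 : (x ⟨k, hk⟩ : ℕ) ≠ (y ⟨k, hk⟩ : ℕ) := fun h => hne (Fin.ext h)
    simp only [hd]
    omega
  have hd0 : ∀ j : Fin l, (j : ℕ) < k → d j = 0 := by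
    intro j hj
    have hj' := h0 j hj
    simp only [hd, hj']
    omega
  -- bounds on binXorVal
  set v := binXorVal l x y with hv
  have hvsum : v = ∑ j : Fin l, (d j : ℝ) / 2 ^ ((j : ℕ) + 1) := rfl
  have hlow : ((1:ℝ)/2) ^ (k + 1) ≤ v := by
    rw [hvsum]
    have : ((1:ℝ)/2) ^ (k+1) = (d ⟨k, hk⟩ : ℝ) / 2 ^ (k + 1) := by
      rw [hdk]; simp [div_pow]
    rw [this]
    apply Finset.single_le_sum (f := fun j : Fin l => (d j : ℝ) / 2 ^ ((j : ℕ) + 1))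
      (fun j _ => by positivity) (Finset.mem_univ ⟨k, hk⟩)
  have hup : v < ((1:ℝ)/2) ^ k := by
    set f : ℕ → ℝ := fun n => if h : n < l then (d ⟨n, h⟩ : ℝ) / 2 ^ (n + 1) else 0 with hf
    have hvrange : v = ∑ j ∈ Finset.range l, f j := by
      rw [← Fin.sum_univ_eq_sum_range, hvsum]
      apply Finset.sum_congr rfl
      intro j _
      rw [hf]
      simp only [j.isLt, dif_pos]
    have hsplit : Finset.range l = Finset.Ico 0 k ∪ Finset.Ico k l := by
      rw [Finset.Ico_union_Ico_eq_Ico (by omega) (by omega), Finset.range_eq_Ico]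
    have hbound : v ≤ ∑ j ∈ Finset.Ico k l, ((1:ℝ)/2) ^ (j + 1) := by
      rw [hvrange, hsplit, Finset.sum_union (Finset.Ico_disjoint_Ico_consecutive 0 k l)]
      have hz : ∑ j ∈ Finset.Ico 0 k, f j = 0 := by
        apply Finset.sum_eq_zero
        intro j hj
        rw [Finset.mem_Ico] at hj
        have hjl : j < l := by omega
        rw [hf]
        simp only [hjl, dif_pos]
        rw [hd0 ⟨j, hjl⟩ hj.2]
        simp
      rw [hz, zero_add]
      apply Finset.sum_le_sum
      intro j hj
      rw [Finset.mem_Ico] at hj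
      rw [hf]
      simp only [hj.2, dif_pos]
      rw [div_pow, one_pow]
      have hle1 : (d ⟨j, hj.2⟩ : ℝ) ≤ 1 := by exact_mod_cast hd1 _
      gcongr
    have hgeom : ∑ j ∈ Finset.Ico k l, ((1:ℝ)/2) ^ (j + 1) = (1/2) ^ k - (1/2) ^ l := by
      have h := geom_tail (l - k) k
      rw [show k + (l - k) = l by omega] at h
      exact h
    have hpos : (0:ℝ) < (1/2) ^ l := by positivity
    calc v ≤ (1/2) ^ k - (1/2) ^ l := hbound.trans_eq hgeom
      _ < (1/2) ^ k := by linarith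
  -- compute the floor of logb
  have hvpos : 0 < v := lt_of_lt_of_le (by positivity) hlow
  have hpow : ∀ n : ℕ, ((1:ℝ)/2) ^ n = (2:ℝ) ^ (-(n:ℤ)) := by
    intro n
    rw [zpow_neg, zpow_natCast]
    simp [one_div, inv_pow]
  have hlogbpow : ∀ n : ℤ, Real.logb 2 ((2:ℝ) ^ n) = n := by
    intro n
    rw [Real.logb, Real.log_zpow, mul_div_assoc,
      div_self (Real.log_ne_zero_of_pos_of_ne_one (by norm_num) (by norm_num)), mul_one]
  have hfloor : ⌊Real.logb 2 v⌋ = -(k + 1 : ℤ) := by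
    rw [Int.floor_eq_iff]
    constructor
    · have hlow' : (2:ℝ) ^ (-(k+1:ℕ) : ℤ) ≤ v := by rw [← hpow (k+1)]; exact hlow
      have h1 := Real.logb_le_logb_of_le (b := 2) one_lt_two
        (by positivity : (0:ℝ) < (2:ℝ) ^ (-(k+1:ℕ) : ℤ)) hlow'
      rw [hlogbpow] at h1
      push_cast at h1 ⊢
      linarith
    · have hup' : v < (2:ℝ) ^ (-(k:ℕ) : ℤ) := by rw [← hpow k]; exact hup
      have h2 := Real.logb_lt_logb (b := 2) one_lt_two hvpos hup'
      rw [hlogbpow] at h2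
      push_cast at h2 ⊢
      linarith
  rw [hfloor, hTD]
  omega
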